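/- Let T > 0 and let v : ℝ³ × [0,T) → ℝ³, p : ℝ³ × [0,T) → ℝ be a smooth solution of the incompressible Euler equations ∂_t v + (v·∇)v = -∇p, div v = 0. Assume: (i) for every t₀ ∈ (0,T), ∫₀^{t₀} sup_{x∈ℝ³} ‖v(x,t)‖ dt < ∞; (ii) for every ε > 0 and t₀ ∈ (0,T) there exists R₁ > 0 such that ‖∇v(x,t)‖ ≤ ε whenever |x| ≥ R₁ and t ∈ [0,t₀]. Let X : ℝ³ × [0,T) → ℝ³ be the particle trajectory map, satisfying ∂_t X(a,t) = v(X(a,t),t) and X(a,0) = a, and let ω = curl_x v with ω₀ = ω(·,0). Then for every ε > 0 and every t₀ ∈ (0,T) there exists R₀ > 0 such that ‖ω(X(a,t),t)‖ ≤ e^{εt}·‖ω₀(a)‖ for all a with |a| ≥ R₀ and all t ∈ [0,t₀]. -/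

import Mathlib

noncomputable section

open MeasureTheory
open scoped ENNReal NNReal

/-- ℝ³ with the Euclidean norm. -/
abbrev E3 := EuclideanSpace ℝ (Fin 3)

/-- The curl of a vector field on ℝ³. -/
def curl3 (u : E3 → E3) (y : E3) : E3 :=
  (WithLp.equiv 2 (Fin 3 → ℝ)).symm
    ![fderiv ℝ u y (EuclideanSpace.single 1 1) 2 - fderiv ℝ u y (EuclideanSpace.single 2 1) 1,
      fderiv ℝ u y (EuclideanSpace.single 2 1) 0 - fderiv ℝ u y (EuclideanSpace.single 0 1) 2,
      fderiv ℝ u y (EuclideanSpace.single 0 1) 1 - fderiv ℝ u y (EuclideanSpace.single 1 1) 0]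

/-- The divergence of a vector field on ℝ³. -/
def div3 (u : E3 → E3) (y : E3) : ℝ :=
  ∑ i, fderiv ℝ u y (EuclideanSpace.single i 1) i

/-- The vorticity Ω = curl_y V of a time-dependent vector field. -/
def vort (V : E3 → ℝ → E3) (y : E3) (s : ℝ) : E3 := curl3 (fun y' => V y' s) y

set_option maxHeartbeats 2000000

lemma grad_comp (f : E3 → ℝ) (x : E3) (i : Fin 3) :
    gradient f x i = fderiv ℝ f x (EuclideanSpace.single i 1) := by
  have h1 : gradient f x i = (inner ℝ (gradient f x) (EuclideanSpace.single i (1:ℝ)) : ℝ) := by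
    rw [EuclideanSpace.inner_single_right]; simp
  rw [h1, gradient, InnerProductSpace.toDual_symm_apply]

-- eval helper, vector valued
lemma fderiv_eval {α : Type*} [NormedAddCommGroup α] [NormedSpace ℝ α]
    {F : Type*} [NormedAddCommGroup F] [NormedSpace ℝ F]
    (g : α → α →L[ℝ] F) (q : α) (hg : DifferentiableAt ℝ g q) (w u : α) :
    fderiv ℝ (fun q' => g q' w) q u = fderiv ℝ g q u w := by
  have h : HasFDerivAt (fun q' => g q' w)
      ((ContinuousLinearMap.apply ℝ F w).comp (fderiv ℝ g q)) q :=
    (ContinuousLinearMap.apply ℝ F w).hasFDerivAt.comp q hg.hasFDerivAt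
  rw [h.fderiv]; rfl

lemma fderiv_eval_comp {α : Type*} [NormedAddCommGroup α] [NormedSpace ℝ α]
    (g : α → α →L[ℝ] E3) (q : α) (hg : DifferentiableAt ℝ g q) (w u : α) (i : Fin 3) :
    fderiv ℝ (fun q' => g q' w i) q u = fderiv ℝ g q u w i := by
  have h0 := (EuclideanSpace.proj i).hasFDerivAt.comp q
      ((ContinuousLinearMap.apply ℝ E3 w).hasFDerivAt.comp q hg.hasFDerivAt)
  have h : HasFDerivAt (fun q' => g q' w i)
      ((EuclideanSpace.proj i).comp
        ((ContinuousLinearMap.apply ℝ E3 w).comp (fderiv ℝ g q))) q := h0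
  rw [h.fderiv]; rfl

-- decomposition of (y,0)
lemma prod_decomp (y : E3) :
    ((y, (0:ℝ)) : E3 × ℝ) = y 0 • ((EuclideanSpace.single 0 1 : E3), (0:ℝ))
      + y 1 • ((EuclideanSpace.single 1 1 : E3), (0:ℝ))
      + y 2 • ((EuclideanSpace.single 2 1 : E3), (0:ℝ)) := by
  refine Prod.ext ?_ (by simp)
  refine PiLp.ext fun j => ?_
  fin_cases j <;> simp [EuclideanSpace.single_apply]

variable (v : E3 → ℝ → E3)

/-- the spatial unit directions in E3 × ℝ -/
def eE (j : Fin 3) : E3 × ℝ := ((EuclideanSpace.single j 1 : E3), (0:ℝ))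

/-- vorticity as a function on spacetime, written via the full fderiv -/
def Om (q : E3 × ℝ) : E3 :=
  (WithLp.equiv 2 (Fin 3 → ℝ)).symm
    ![fderiv ℝ (fun q' : E3 × ℝ => v q'.1 q'.2) q (eE 1) 2
        - fderiv ℝ (fun q' : E3 × ℝ => v q'.1 q'.2) q (eE 2) 1,
      fderiv ℝ (fun q' : E3 × ℝ => v q'.1 q'.2) q (eE 2) 0
        - fderiv ℝ (fun q' : E3 × ℝ => v q'.1 q'.2) q (eE 0) 2,
      fderiv ℝ (fun q' : E3 × ℝ => v q'.1 q'.2) q (eE 0) 1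
        - fderiv ℝ (fun q' : E3 × ℝ => v q'.1 q'.2) q (eE 1) 0]

variable (hv : ContDiff ℝ (⊤ : ℕ∞) (fun q : E3 × ℝ => v q.1 q.2))

section
include hv

/-- spatial fderiv in terms of full fderiv -/
lemma hasFDerivAt_slice (y : E3) (s : ℝ) :
    HasFDerivAt (fun y' => v y' s)
      ((fderiv ℝ (fun q : E3 × ℝ => v q.1 q.2) (y, s)).comp
        (ContinuousLinearMap.inl ℝ E3 ℝ)) y := by
  have h1 : HasFDerivAt (fun y' : E3 => ((y', s) : E3 × ℝ))
      (ContinuousLinearMap.inl ℝ E3 ℝ) y :=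
    (hasFDerivAt_id y).prodMk (hasFDerivAt_const s y)
  exact (((hv.differentiable (by simp)) (y, s)).hasFDerivAt).comp y h1

lemma fderiv_slice (y : E3) (s : ℝ) (w : E3) :
    fderiv ℝ (fun y' => v y' s) y w
      = fderiv ℝ (fun q : E3 × ℝ => v q.1 q.2) (y, s) (w, 0) := by
  rw [(hasFDerivAt_slice v hv y s).fderiv]; rfl

lemma deriv_slice (x : E3) (t : ℝ) :
    deriv (fun t' => v x t') t
      = fderiv ℝ (fun q : E3 × ℝ => v q.1 q.2) (x, t) (0, 1) := by
  have h1 : HasDerivAt (fun t' : ℝ => ((x, t') : E3 × ℝ)) ((0 : E3), (1:ℝ)) t :=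
    (hasDerivAt_const t x).prodMk (hasDerivAt_id t)
  have h2 := (((hv.differentiable (by simp)) (x, t)).hasFDerivAt).comp_hasDerivAt t h1
  exact h2.deriv

lemma vort_eq_Om (y : E3) (s : ℝ) : vort v y s = Om v (y, s) := by
  unfold vort curl3 Om
  simp only [fderiv_slice v hv y s]
  rfl

lemma fderivV_contDiff :
    ContDiff ℝ (⊤ : ℕ∞) (fderiv ℝ (fun q : E3 × ℝ => v q.1 q.2)) :=
  hv.fderiv_right (by simp)

lemma Om_contDiff : ContDiff ℝ (⊤ : ℕ∞) (Om v) := by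
  have hD := fderivV_contDiff v hv
  have hcomp : ∀ (w : E3 × ℝ) (i : Fin 3),
      ContDiff ℝ (⊤ : ℕ∞) (fun q => fderiv ℝ (fun q' : E3 × ℝ => v q'.1 q'.2) q w i) := by
    intro w i
    exact (EuclideanSpace.proj i).contDiff.comp (hD.clm_apply contDiff_const)
  have : Om v = (PiLp.continuousLinearEquiv 2 ℝ (fun _ : Fin 3 => ℝ)).symm ∘
      (fun q => ![fderiv ℝ (fun q' : E3 × ℝ => v q'.1 q'.2) q (eE 1) 2
        - fderiv ℝ (fun q' : E3 × ℝ => v q'.1 q'.2) q (eE 2) 1,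
      fderiv ℝ (fun q' : E3 × ℝ => v q'.1 q'.2) q (eE 2) 0
        - fderiv ℝ (fun q' : E3 × ℝ => v q'.1 q'.2) q (eE 0) 2,
      fderiv ℝ (fun q' : E3 × ℝ => v q'.1 q'.2) q (eE 0) 1
        - fderiv ℝ (fun q' : E3 × ℝ => v q'.1 q'.2) q (eE 1) 0]) := rfl
  rw [this]
  refine ((PiLp.continuousLinearEquiv 2 ℝ (fun _ : Fin 3 => ℝ)).symm :
      (Fin 3 → ℝ) →L[ℝ] E3).contDiff.comp ?_
  refine contDiff_pi.2 fun i => ?_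
  fin_cases i <;>
    simp only [Matrix.cons_val_zero, Matrix.cons_val_one, Matrix.head_cons,
      Matrix.cons_val_two, Matrix.tail_cons] <;>
    exact (hcomp _ _).sub (hcomp _ _)

end

section
variable (T : ℝ) (p : E3 → ℝ → ℝ)
include hv

set_option maxHeartbeats 2000000 in
lemma key_vorticity
    (hp : ContDiff ℝ (⊤ : ℕ∞) (fun q : E3 × ℝ => p q.1 q.2))
    (heq : ∀ (x : E3), ∀ t ∈ Set.Ico (0 : ℝ) T,
      deriv (fun t' => v x t') t + fderiv ℝ (fun x' => v x' t) x (v x t)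
        = - gradient (fun x' => p x' t) x)
    (hdiv : ∀ (x : E3), ∀ t ∈ Set.Ico (0 : ℝ) T, div3 (fun x' => v x' t) x = 0)
    (x : E3) (t : ℝ) (ht : t ∈ Set.Ico (0 : ℝ) T) :
    fderiv ℝ (Om v) (x, t) (v x t, 1)
      = fderiv ℝ (fun x' => v x' t) x (Om v (x, t)) := by
  set V : E3 × ℝ → E3 := fun q => v q.1 q.2 with hV
  set W : (E3 × ℝ) → (E3 × ℝ) →L[ℝ] E3 := fderiv ℝ V with hW
  set q : E3 × ℝ := (x, t) with hq
  set u : E3 × ℝ := (v x t, 1) with hu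
  have hWdiff : Differentiable ℝ W := (fderivV_contDiff v hv).differentiable (by simp)
  set D2 : (E3 × ℝ) →L[ℝ] (E3 × ℝ) →L[ℝ] E3 := fderiv ℝ W q with hD2
  -- symmetry of the second derivative of V
  have hsym : ∀ a b : E3 × ℝ, D2 a b = D2 b a :=
    fun a b => second_derivative_symmetric
      (fun y => ((hv.differentiable (by simp)) y).hasFDerivAt)
      (hWdiff q).hasFDerivAt a b
  -- differentiability of G-components
  have hGd : ∀ (w : E3 × ℝ) (i : Fin 3), DifferentiableAt ℝ (fun q' => W q' w i) q := by
    intro w i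
    exact (((EuclideanSpace.proj i).contDiff.comp
      ((fderivV_contDiff v hv).clm_apply contDiff_const)).differentiable (by simp)) q
  -- derivative of G-components
  have hGder : ∀ (w a : E3 × ℝ) (i : Fin 3),
      fderiv ℝ (fun q' => W q' w i) q a = D2 a w i := by
    intro w a i
    exact fderiv_eval_comp W q (hWdiff q) w a i
  -- component extraction for fderiv of Om
  have hOmd : DifferentiableAt ℝ (Om v) q := ((Om_contDiff v hv).differentiable (by simp)) q
  have hOmc : ∀ i : Fin 3, fderiv ℝ (Om v) q u i = fderiv ℝ (fun q' => Om v q' i) q u := by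
    intro i
    have h0 := (EuclideanSpace.proj i).hasFDerivAt.comp q hOmd.hasFDerivAt
    have h1 : HasFDerivAt (fun q' => Om v q' i)
        ((EuclideanSpace.proj i).comp (fderiv ℝ (Om v) q)) q := h0
    rw [h1.fderiv]; rfl
  -- Om components as explicit functions
  have hOm0 : ∀ q' : E3 × ℝ, Om v q' 0 = W q' (eE 1) 2 - W q' (eE 2) 1 := by
    intro q'; simp [Om, hW, hV]
  have hOm1 : ∀ q' : E3 × ℝ, Om v q' 1 = W q' (eE 2) 0 - W q' (eE 0) 2 := by
    intro q'; simp [Om, hW, hV]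
  have hOm2 : ∀ q' : E3 × ℝ, Om v q' 2 = W q' (eE 0) 1 - W q' (eE 1) 0 := by
    intro q'; simp [Om, hW, hV]
  -- derivative of differences
  have hdercomp : ∀ (w₁ w₂ : E3 × ℝ) (i₁ i₂ : Fin 3),
      fderiv ℝ (fun q' => W q' w₁ i₁ - W q' w₂ i₂) q u
        = D2 w₁ u i₁ - D2 w₂ u i₂ := by
    intro w₁ w₂ i₁ i₂
    rw [fderiv_fun_sub (hGd w₁ i₁) (hGd w₂ i₂)]
    simp only [ContinuousLinearMap.coe_sub', Pi.sub_apply]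
    rw [hGder w₁ u i₁, hGder w₂ u i₂, hsym u w₁, hsym u w₂]
  -- LHS components
  have hL0 : fderiv ℝ (Om v) q u 0 = D2 (eE 1) u 2 - D2 (eE 2) u 1 := by
    rw [hOmc 0]
    rw [show (fun q' => Om v q' 0) = fun q' => W q' (eE 1) 2 - W q' (eE 2) 1 from funext hOm0]
    exact hdercomp _ _ _ _
  have hL1 : fderiv ℝ (Om v) q u 1 = D2 (eE 2) u 0 - D2 (eE 0) u 2 := by
    rw [hOmc 1]
    rw [show (fun q' => Om v q' 1) = fun q' => W q' (eE 2) 0 - W q' (eE 0) 2 from funext hOm1]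
    exact hdercomp _ _ _ _
  have hL2 : fderiv ℝ (Om v) q u 2 = D2 (eE 0) u 1 - D2 (eE 1) u 0 := by
    rw [hOmc 2]
    rw [show (fun q' => Om v q' 2) = fun q' => W q' (eE 0) 1 - W q' (eE 1) 0 from funext hOm2]
    exact hdercomp _ _ _ _
  -- the spatial derivative of v(·,t)
  set A : E3 →L[ℝ] E3 := (W q).comp (ContinuousLinearMap.inl ℝ E3 ℝ) with hA
  have hAder : HasFDerivAt (fun x' => v x' t) A x := hasFDerivAt_slice v hv x t
  have hAe : ∀ k : Fin 3, A (EuclideanSpace.single k 1) = W q (eE k) := by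
    intro k; rfl
  -- the convective term as a function of x'
  set Hf : E3 → E3 := fun x' => W (x', t) (v x' t, 1) with hHf
  have hHeq : ∀ x' : E3, Hf x' = - gradient (fun x'' => p x'' t) x' := by
    intro x'
    rw [← heq x' t ht]
    rw [deriv_slice v hv x' t, fderiv_slice v hv x' t (v x' t)]
    rw [hHf]
    show W (x', t) (v x' t, 1) = W (x', t) (0, 1) + W (x', t) (v x' t, 0)
    rw [← ContinuousLinearMap.map_add]
    congr 1
    simp [Prod.mk_add_mk]
  -- derivative of Hf, first form (product rule)
  have hcder : HasFDerivAt (fun x' : E3 => W (x', t)) (D2.comp (ContinuousLinearMap.inl ℝ E3 ℝ)) x := by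
    have h1 : HasFDerivAt (fun x' : E3 => ((x', t) : E3 × ℝ))
        (ContinuousLinearMap.inl ℝ E3 ℝ) x :=
      (hasFDerivAt_id x).prodMk (hasFDerivAt_const t x)
    exact (hWdiff q).hasFDerivAt.comp x h1
  have huder : HasFDerivAt (fun x' : E3 => ((v x' t, 1) : E3 × ℝ))
      (A.prod (0 : E3 →L[ℝ] ℝ)) x :=
    hAder.prodMk (hasFDerivAt_const (1:ℝ) x)
  have hHf1 : HasFDerivAt Hf
      ((W q).comp (A.prod (0 : E3 →L[ℝ] ℝ))
        + (D2.comp (ContinuousLinearMap.inl ℝ E3 ℝ)).flip u) x := by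
    have := hcder.clm_apply huder
    convert this using 2
  -- pressure part
  set P : E3 → ℝ := fun x' => p x' t with hPdef
  have hP : ContDiff ℝ (⊤ : ℕ∞) P := hp.comp ((contDiff_id).prodMk contDiff_const)
  have hPd : Differentiable ℝ (fderiv ℝ P) := (hP.fderiv_right (m := (⊤ : ℕ∞)) (by simp)).differentiable (by simp)
  set D2P : E3 →L[ℝ] E3 →L[ℝ] ℝ := fderiv ℝ (fderiv ℝ P) x with hD2P
  have hsymP : ∀ a b : E3, D2P a b = D2P b a :=
    fun a b => second_derivative_symmetric
      (fun y => ((hP.differentiable (by simp)) y).hasFDerivAt) (hPd x).hasFDerivAt a b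
  have hHfcomp : ∀ i k : Fin 3,
      fderiv ℝ (fun x' => Hf x' i) x (EuclideanSpace.single k 1)
        = -(D2P (EuclideanSpace.single k 1) (EuclideanSpace.single i 1)) := by
    intro i k
    have hfn : (fun x' => Hf x' i)
        = fun x' => -(fderiv ℝ P x' (EuclideanSpace.single i 1)) := by
      funext x'
      rw [hHeq x']
      show (-(gradient P x')) i = _
      rw [show (-(gradient P x')) i = -((gradient P x') i) from rfl, grad_comp]
    rw [hfn, fderiv_fun_neg]
    simp only [ContinuousLinearMap.neg_apply, neg_inj]
    exact fderiv_eval (fderiv ℝ P) x (hPd x) (EuclideanSpace.single i 1)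
      (EuclideanSpace.single k 1)
  -- Euler-derived second-derivative relation
  have hED : ∀ k i : Fin 3, D2 (eE k) u i
      = -(D2P (EuclideanSpace.single k 1) (EuclideanSpace.single i 1))
        - W q (W q (eE k), 0) i := by
    intro k i
    have h0 := (EuclideanSpace.proj i).hasFDerivAt.comp x hHf1
    have h1 : HasFDerivAt (fun x' => Hf x' i)
        ((EuclideanSpace.proj i).comp
          ((W q).comp (A.prod (0 : E3 →L[ℝ] ℝ))
            + (D2.comp (ContinuousLinearMap.inl ℝ E3 ℝ)).flip u)) x := h0
    have e1 : fderiv ℝ (fun x' => Hf x' i) x (EuclideanSpace.single k 1)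
        = W q (W q (eE k), 0) i + D2 (eE k) u i := by
      rw [h1.fderiv]
      show (((W q).comp (A.prod (0 : E3 →L[ℝ] ℝ))
            + (D2.comp (ContinuousLinearMap.inl ℝ E3 ℝ)).flip u)
          (EuclideanSpace.single k 1)) i = _
      rw [ContinuousLinearMap.add_apply]
      rw [show ((W q).comp (A.prod (0 : E3 →L[ℝ] ℝ))) (EuclideanSpace.single k 1)
          = W q (W q (eE k), 0) from rfl]
      rw [show ((D2.comp (ContinuousLinearMap.inl ℝ E3 ℝ)).flip u) (EuclideanSpace.single k 1)
          = D2 (eE k) u from rfl]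
      rfl
    rw [hHfcomp i k] at e1
    linarith [e1]
  -- decomposition of W q (y, 0) into components
  have hWdec : ∀ (y : E3) (i : Fin 3), W q (y, 0) i
      = y 0 * W q (eE 0) i + y 1 * W q (eE 1) i + y 2 * W q (eE 2) i := by
    intro y i
    have : ((y, (0:ℝ)) : E3 × ℝ) = y 0 • eE 0 + y 1 • eE 1 + y 2 • eE 2 := prod_decomp y
    rw [this]
    rw [ContinuousLinearMap.map_add, ContinuousLinearMap.map_add,
      ContinuousLinearMap.map_smul, ContinuousLinearMap.map_smul,
      ContinuousLinearMap.map_smul]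
    show (y 0 • W q (eE 0) + y 1 • W q (eE 1) + y 2 • W q (eE 2) : E3) i = _
    simp [PiLp.add_apply, PiLp.smul_apply, smul_eq_mul]
  -- trace-free condition
  have htr : W q (eE 0) 0 + W q (eE 1) 1 + W q (eE 2) 2 = 0 := by
    have h := hdiv x t ht
    unfold div3 at h
    rw [Fin.sum_univ_three] at h
    rw [fderiv_slice v hv x t, fderiv_slice v hv x t, fderiv_slice v hv x t] at h
    exact h
  -- right-hand side, componentwise
  have goal0 : fderiv ℝ (Om v) q u 0 = W q (Om v q, 0) 0 := by
    rw [hWdec (Om v q) 0, hOm0 q, hOm1 q, hOm2 q, hL0, hED 1 2, hED 2 1,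
      hWdec (W q (eE 1)) 2, hWdec (W q (eE 2)) 1,
      hsymP (EuclideanSpace.single 1 1) (EuclideanSpace.single 2 1)]
    linear_combination (W q (eE 2) 1 - W q (eE 1) 2) * htr
  have goal1 : fderiv ℝ (Om v) q u 1 = W q (Om v q, 0) 1 := by
    rw [hWdec (Om v q) 1, hOm0 q, hOm1 q, hOm2 q, hL1, hED 2 0, hED 0 2,
      hWdec (W q (eE 2)) 0, hWdec (W q (eE 0)) 2,
      hsymP (EuclideanSpace.single 2 1) (EuclideanSpace.single 0 1)]
    linear_combination (W q (eE 0) 2 - W q (eE 2) 0) * htr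
  have goal2 : fderiv ℝ (Om v) q u 2 = W q (Om v q, 0) 2 := by
    rw [hWdec (Om v q) 2, hOm0 q, hOm1 q, hOm2 q, hL2, hED 0 1, hED 1 0,
      hWdec (W q (eE 0)) 1, hWdec (W q (eE 1)) 0,
      hsymP (EuclideanSpace.single 0 1) (EuclideanSpace.single 1 1)]
    linear_combination (W q (eE 1) 0 - W q (eE 0) 1) * htr
  rw [hAder.fderiv]
  refine PiLp.ext fun i => ?_
  fin_cases i
  · exact goal0
  · exact goal1
  · exact goal2

end


/-- Far-field vorticity estimate for smooth solutions of the Euler equations (Theorem 1.3). -/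
theorem euler_farfield_vorticity_estimate
    (T : ℝ) (hT : 0 < T)
    (v : E3 → ℝ → E3) (p : E3 → ℝ → ℝ)
    (hv : ContDiff ℝ (⊤ : ℕ∞) (fun q : E3 × ℝ => v q.1 q.2))
    (hp : ContDiff ℝ (⊤ : ℕ∞) (fun q : E3 × ℝ => p q.1 q.2))
    (heq : ∀ (x : E3), ∀ t ∈ Set.Ico (0 : ℝ) T,
      deriv (fun t' => v x t') t + fderiv ℝ (fun x' => v x' t) x (v x t)
        = - gradient (fun x' => p x' t) x)
    (hdiv : ∀ (x : E3), ∀ t ∈ Set.Ico (0 : ℝ) T, div3 (fun x' => v x' t) x = 0)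
    (hint : ∀ t₀ ∈ Set.Ioo (0 : ℝ) T,
      (∫⁻ t in Set.Ioc (0 : ℝ) t₀, ⨆ x : E3, (‖v x t‖₊ : ℝ≥0∞)) < ⊤)
    (hgrad : ∀ ε : ℝ, 0 < ε → ∀ t₀ ∈ Set.Ioo (0 : ℝ) T, ∃ R₁ : ℝ, 0 < R₁ ∧
      ∀ (x : E3) (t : ℝ), R₁ ≤ ‖x‖ → t ∈ Set.Icc 0 t₀ →
        ‖fderiv ℝ (fun x' => v x' t) x‖ ≤ ε)
    (X : E3 → ℝ → E3)
    (hX0 : ∀ a : E3, X a 0 = a)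
    (hX : ∀ (a : E3), ∀ t ∈ Set.Ico (0 : ℝ) T,
      HasDerivAt (fun t' => X a t') (v (X a t) t) t) :
    ∀ ε : ℝ, 0 < ε → ∀ t₀ ∈ Set.Ioo (0 : ℝ) T, ∃ R₀ : ℝ, 0 < R₀ ∧
      ∀ (a : E3) (t : ℝ), R₀ ≤ ‖a‖ → t ∈ Set.Icc 0 t₀ →
        ‖vort v (X a t) t‖ ≤ Real.exp (ε * t) * ‖vort v a 0‖ := by
  intro ε hε t₀ ht₀
  obtain ⟨ht₀0, ht₀T⟩ := ht₀
  obtain ⟨R₁, hR₁, hR₁v⟩ := hgrad ε hε t₀ ⟨ht₀0, ht₀T⟩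
  set M : ℝ := (∫⁻ t in Set.Ioc (0:ℝ) t₀, ⨆ x : E3, (‖v x t‖₊ : ℝ≥0∞)).toReal with hMdef
  have hMtop := hint t₀ ⟨ht₀0, ht₀T⟩
  have hM0 : 0 ≤ M := ENNReal.toReal_nonneg
  refine ⟨R₁ + M + 1, by positivity, ?_⟩
  intro a t haR ht
  have hsub : Set.Icc (0:ℝ) t₀ ⊆ Set.Ico 0 T :=
    fun s hs => ⟨hs.1, lt_of_le_of_lt hs.2 ht₀T⟩
  have hVc : Continuous (fun q : E3 × ℝ => v q.1 q.2) := hv.continuous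
  have hXc : ContinuousOn (fun s => X a s) (Set.Icc 0 t₀) := fun s hs =>
    ((hX a s (hsub hs)).continuousAt).continuousWithinAt
  -- displacement bound
  have hdisp : ∀ s ∈ Set.Icc (0:ℝ) t₀, ‖X a s - a‖ ≤ M := by
    intro s hs
    have h0s : (0:ℝ) ≤ s := hs.1
    have hder : ∀ r ∈ Set.uIcc (0:ℝ) s, HasDerivAt (fun t' => X a t') (v (X a r) r) r := by
      intro r hr
      rw [Set.uIcc_of_le h0s] at hr
      exact hX a r (hsub ⟨hr.1, le_trans hr.2 hs.2⟩)
    have hcont : ContinuousOn (fun r => v (X a r) r) (Set.uIcc 0 s) := by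
      rw [Set.uIcc_of_le h0s]
      have hsubs : Set.Icc (0:ℝ) s ⊆ Set.Icc 0 t₀ := Set.Icc_subset_Icc_right hs.2
      exact hVc.comp_continuousOn (((hXc.mono hsubs)).prodMk continuousOn_id)
    have hintg : IntervalIntegrable (fun r => v (X a r) r) MeasureTheory.volume 0 s :=
      hcont.intervalIntegrable
    have hftc := intervalIntegral.integral_eq_sub_of_hasDerivAt hder hintg
    calc ‖X a s - a‖ = ‖∫ r in (0:ℝ)..s, v (X a r) r‖ := by rw [hftc, hX0]
    _ = ‖∫ r in Set.Ioc (0:ℝ) s, v (X a r) r‖ := by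
        rw [intervalIntegral.integral_of_le h0s]
    _ ≤ (∫⁻ r in Set.Ioc (0:ℝ) s, ENNReal.ofReal ‖v (X a r) r‖).toReal :=
        MeasureTheory.norm_integral_le_lintegral_norm _
    _ ≤ M := by
        refine ENNReal.toReal_mono hMtop.ne ?_
        refine le_trans (MeasureTheory.lintegral_mono fun r => ?_)
          (MeasureTheory.lintegral_mono_set (Set.Ioc_subset_Ioc_right hs.2))
        rw [ofReal_norm, enorm_eq_nnnorm]
        exact le_iSup (fun x : E3 => (‖v x r‖₊ : ℝ≥0∞)) (X a r)
  -- trajectories stay far out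
  have hfar : ∀ s ∈ Set.Icc (0:ℝ) t₀, R₁ ≤ ‖X a s‖ := by
    intro s hs
    have h1 := hdisp s hs
    have h2 : ‖a‖ - ‖X a s‖ ≤ ‖a - X a s‖ := norm_sub_norm_le a (X a s)
    rw [norm_sub_rev] at h2
    linarith
  -- the vorticity along the trajectory
  set Wf : ℝ → E3 := fun s => Om v (X a s, s) with hWfdef
  have hWder : ∀ s ∈ Set.Ico (0:ℝ) t₀,
      HasDerivAt Wf (fderiv ℝ (fun x' => v x' s) (X a s) (Wf s)) s := by
    intro s hs
    have hsIco : s ∈ Set.Ico (0:ℝ) T := hsub ⟨hs.1, le_of_lt hs.2⟩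
    have hγ : HasDerivAt (fun s' => ((X a s', s') : E3 × ℝ)) (v (X a s) s, 1) s :=
      (hX a s hsIco).prodMk (hasDerivAt_id s)
    have h1 := HasFDerivAt.comp_hasDerivAt (f := fun s' => ((X a s', s') : E3 × ℝ)) s
      (((Om_contDiff v hv).differentiable (by simp) (X a s, s)).hasFDerivAt) hγ
    have h2 := key_vorticity v hv T p hp heq hdiv (X a s) s hsIco
    rw [h2] at h1
    exact h1
  -- Gronwall
  have hWc : ContinuousOn Wf (Set.Icc 0 t₀) :=
    (Om_contDiff v hv).continuous.comp_continuousOn (hXc.prodMk continuousOn_id)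
  have hgron := norm_le_gronwallBound_of_norm_deriv_right_le (δ := ‖Wf 0‖) (K := ε) (ε := 0)
    hWc (fun s hs => (hWder s hs).hasDerivWithinAt) le_rfl
    (fun s hs => by
      have hb := hR₁v (X a s) s (hfar s ⟨hs.1, le_of_lt hs.2⟩) ⟨hs.1, le_of_lt hs.2⟩
      calc ‖fderiv ℝ (fun x' => v x' s) (X a s) (Wf s)‖
          ≤ ‖fderiv ℝ (fun x' => v x' s) (X a s)‖ * ‖Wf s‖ :=
            ContinuousLinearMap.le_opNorm _ _
        _ ≤ ε * ‖Wf s‖ + 0 := by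
            have : (0:ℝ) ≤ ‖Wf s‖ := norm_nonneg _
            nlinarith)
    t ht
  rw [gronwallBound_ε0, sub_zero] at hgron
  have e1 : vort v (X a t) t = Wf t := vort_eq_Om v hv (X a t) t
  have e2 : vort v a 0 = Wf 0 := by
    rw [hWfdef]
    simp only [hX0 a]
    exact vort_eq_Om v hv a 0
  rw [e1, e2]
  calc ‖Wf t‖ ≤ ‖Wf 0‖ * Real.exp (ε * t) := hgron
  _ = Real.exp (ε * t) * ‖Wf 0‖ := mul_comm _ _
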